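/- For a nonempty worm A all of whose modalities are strictly greater than α, and any worm B, GLP_Λ proves A⟨α⟩B ↔ A⟨α⟩ⁿB for every n ≥ 1, where ⟨α⟩ⁿ denotes n consecutive occurrences of ⟨α⟩. -/

import Mathlib

inductive Formula (L : Type) : Type where
  | bot : Formula L
  | var : Nat → Formula L
  | imp : Formula L → Formula L → Formula L
  | box : L → Formula L → Formula L

namespace Formula

variable {L : Type}

def neg (φ : Formula L) : Formula L := imp φ bot
def top : Formula L := neg bot
def and (φ ψ : Formula L) : Formula L := neg (imp φ ψ.neg)
def or (φ ψ : Formula L) : Formula L := imp φ.neg ψ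
def iff (φ ψ : Formula L) : Formula L := (imp φ ψ).and (imp ψ φ)
def dia (α : L) (φ : Formula L) : Formula L := neg (box α φ.neg)

end Formula

open Formula

/-- Provability in the polymodal provability logic `GLP_Λ` over a linear order. -/
inductive GLP {L : Type} [LinearOrder L] : Formula L → Prop where
  | k1 : ∀ φ ψ : Formula L, GLP (φ.imp (ψ.imp φ))
  | k2 : ∀ φ ψ χ : Formula L, GLP ((φ.imp (ψ.imp χ)).imp ((φ.imp ψ).imp (φ.imp χ)))
  | k3 : ∀ φ ψ : Formula L, GLP ((φ.neg.imp ψ.neg).imp (ψ.imp φ))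
  | dist : ∀ (α : L) (φ ψ : Formula L), GLP ((Formula.box α (φ.imp ψ)).imp ((Formula.box α φ).imp (Formula.box α ψ)))
  | lob : ∀ (α : L) (φ : Formula L), GLP ((Formula.box α ((Formula.box α φ).imp φ)).imp (Formula.box α φ))
  | trans : ∀ (α β : L) (φ : Formula L), α ≤ β → GLP ((Formula.box α φ).imp (Formula.box β (Formula.box α φ)))
  | negintro : ∀ (α β : L) (φ : Formula L), α < β → GLP ((dia α φ).imp (Formula.box β (dia α φ)))
  | mono : ∀ (α β : L) (φ : Formula L), α ≤ β → GLP ((Formula.box α φ).imp (Formula.box β φ))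
  | mp : ∀ φ ψ : Formula L, GLP (φ.imp ψ) → GLP φ → GLP ψ
  | nec : ∀ (α : L) (φ : Formula L), GLP φ → GLP (Formula.box α φ)

/-- The worm (iterated consistency statement) associated to a list of modalities. -/
def worm {L : Type} : List L → Formula L
  | [] => Formula.top
  | α :: w => Formula.dia α (worm w)

/-- `Lt α A B` iff `GLP ⊢ B → ⟨α⟩A`. -/
def Lt {L : Type} [LinearOrder L] (α : L) (A B : List L) : Prop :=
  GLP ((worm B).imp (Formula.dia α (worm A)))

def Le {L : Type} [LinearOrder L] (α : L) (A B : List L) : Prop :=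
  Lt α A B ∨ A = B

/-!
Two moves on diamonds can be made under any prefix of a worm: `⟨α⟩⟨α⟩φ → ⟨α⟩φ`
(transitivity) and, for `α < β`, `⟨β⟩φ → ⟨β⟩⟨α⟩φ` (from `⟨α⟩φ → [β]⟨α⟩φ` together with
`⟨β⟩φ → ⟨α⟩φ`). Writing `A = D ++ [β]` with `α < β`, the second move applied right after `β`
inserts further copies of `⟨α⟩`, and the first one collapses them again.
-/

namespace GLP

variable {L : Type} [LinearOrder L]

theorem imp_self (φ : Formula L) : GLP (φ.imp φ) :=
  mp _ _ (mp _ _ (k2 φ (φ.imp φ) φ) (k1 φ (φ.imp φ))) (k1 φ φ)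

theorem imp_trans {φ ψ χ : Formula L} (h₁ : GLP (φ.imp ψ)) (h₂ : GLP (ψ.imp χ)) :
    GLP (φ.imp χ) :=
  mp _ _ (mp _ _ (k2 φ ψ χ) (mp _ _ (k1 (ψ.imp χ) φ) h₂)) h₁

theorem imp_comm {φ ψ χ : Formula L} (h : GLP (φ.imp (ψ.imp χ))) : GLP (ψ.imp (φ.imp χ)) :=
  imp_trans (k1 ψ φ) (mp _ _ (k2 φ ψ χ) h)

theorem imp_contract {φ ψ : Formula L} (h : GLP (φ.imp (φ.imp ψ))) : GLP (φ.imp ψ) :=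
  mp _ _ (mp _ _ (k2 φ φ ψ) h) (imp_self φ)

theorem imp_imp_trans (φ ψ χ : Formula L) :
    GLP ((φ.imp ψ).imp ((ψ.imp χ).imp (φ.imp χ))) :=
  imp_comm (imp_trans (k1 (ψ.imp χ) φ) (k2 φ ψ χ))

theorem neg_imp_neg {φ ψ : Formula L} (h : GLP (φ.imp ψ)) : GLP (ψ.neg.imp φ.neg) :=
  mp _ _ (imp_imp_trans φ ψ bot) h

theorem imp_neg_neg (φ : Formula L) : GLP (φ.imp φ.neg.neg) :=
  imp_comm (imp_self φ.neg)

theorem neg_neg_imp (φ : Formula L) : GLP (φ.neg.neg.imp φ) :=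
  mp _ _ (k3 φ φ.neg.neg) (imp_neg_neg φ.neg)

theorem bot_imp (φ : Formula L) : GLP (bot.imp φ) :=
  imp_trans (k1 bot φ.neg) (neg_neg_imp φ)

theorem and_intro {φ ψ : Formula L} (hφ : GLP φ) (hψ : GLP ψ) : GLP (φ.and ψ) :=
  mp _ _ (imp_comm (mp _ _ (imp_comm (imp_self (φ.imp ψ.neg))) hφ)) hψ

theorem iff_intro {φ ψ : Formula L} (h₁ : GLP (φ.imp ψ)) (h₂ : GLP (ψ.imp φ)) :
    GLP (φ.iff ψ) :=
  and_intro h₁ h₂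

theorem box_mono {φ ψ : Formula L} (γ : L) (h : GLP (φ.imp ψ)) :
    GLP ((box γ φ).imp (box γ ψ)) :=
  mp _ _ (dist γ φ ψ) (nec γ _ h)

theorem dia_mono {φ ψ : Formula L} (γ : L) (h : GLP (φ.imp ψ)) :
    GLP ((dia γ φ).imp (dia γ ψ)) :=
  neg_imp_neg (box_mono γ (neg_imp_neg h))

theorem dia_dia_imp (γ : L) (φ : Formula L) : GLP ((dia γ (dia γ φ)).imp (dia γ φ)) :=
  neg_imp_neg (imp_trans (GLP.trans γ γ φ.neg le_rfl) (box_mono γ (imp_neg_neg _)))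

theorem dia_imp_dia_of_le {α β : L} (h : α ≤ β) (φ : Formula L) :
    GLP ((dia β φ).imp (dia α φ)) :=
  neg_imp_neg (mono α β φ.neg h)

theorem box_imp_dia_imp_dia (γ : L) (φ ψ : Formula L) :
    GLP ((box γ φ).imp ((dia γ ψ).imp (dia γ φ))) := by
  have h : GLP ((box γ φ.neg).imp ((box γ φ).imp (box γ ψ.neg))) :=
    imp_trans (dist γ φ bot) (mp _ _ (k2 _ _ _) (mp _ _ (k1 _ _) (box_mono γ (bot_imp ψ.neg))))
  exact imp_trans (imp_comm h) (imp_imp_trans _ _ bot)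

theorem dia_imp_dia_dia_of_lt {α β : L} (h : α < β) (φ : Formula L) :
    GLP ((dia β φ).imp (dia β (dia α φ))) := by
  have h_box : GLP ((dia β φ).imp (box β (dia α φ))) :=
    imp_trans (dia_imp_dia_of_le h.le φ) (negintro α β φ h)
  exact imp_contract (imp_trans h_box (box_imp_dia_imp_dia β (dia α φ) φ))

end GLP

open GLP

section Worms

variable {L : Type} [LinearOrder L]

theorem worm_append_imp_append (D : List L) {X Y : List L}
    (h : GLP ((worm X).imp (worm Y))) : GLP ((worm (D ++ X)).imp (worm (D ++ Y))) := by
  induction D with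
  | nil => exact h
  | cons γ D ih => exact dia_mono γ ih

theorem worm_insert_of_lt {α β : L} (h : α < β) (D C : List L) :
    GLP ((worm (D ++ β :: C)).imp (worm (D ++ β :: α :: C))) :=
  worm_append_imp_append D (dia_imp_dia_dia_of_lt h (worm C))

theorem worm_dup_imp (α : L) (D C : List L) :
    GLP ((worm (D ++ α :: α :: C)).imp (worm (D ++ α :: C))) :=
  worm_append_imp_append D (dia_dia_imp α (worm C))

theorem worm_replicate_succ_imp (α : L) (D C : List L) (m : ℕ) :
    GLP ((worm (D ++ List.replicate (m + 1) α ++ C)).imp (worm (D ++ α :: C))) := by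
  induction m with
  | zero => simpa using imp_self (worm (D ++ α :: C))
  | succ m ih =>
    have hD : D ++ List.replicate (m + 1 + 1) α ++ C
        = D ++ α :: α :: (List.replicate m α ++ C) := by
      simp [List.replicate_succ]
    rw [hD]
    refine imp_trans (worm_dup_imp α D _) ?_
    simpa [List.replicate_succ] using ih

theorem worm_imp_replicate_succ {α β : L} (h : α < β) (D C : List L) (m : ℕ) :
    GLP ((worm (D ++ β :: α :: C)).imp
      (worm (D ++ β :: (List.replicate (m + 1) α ++ C)))) := by
  induction m with
  | zero => simpa using imp_self (worm (D ++ β :: α :: C))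
  | succ m ih =>
    refine imp_trans ih ?_
    simpa [List.replicate_succ] using worm_insert_of_lt h D (List.replicate (m + 1) α ++ C)

end Worms

/-- For a nonempty worm `A` with all modalities `> α` and any worm `B`,
`GLP ⊢ A⟨α⟩B ↔ A⟨α⟩ⁿB` for every `n ≥ 1`. -/
theorem remove_multiple_minimals {L : Type} [LinearOrder L] (α : L)
    (A B : List L) (hne : A ≠ []) (hA : ∀ β ∈ A, α < β)
    (n : Nat) (hn : 1 ≤ n) :
    GLP ((worm (A ++ α :: B)).iff (worm (A ++ List.replicate n α ++ B))) := by
  obtain ⟨m, rfl⟩ := Nat.exists_eq_add_of_le' hn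
  obtain ⟨D, β, rfl⟩ := List.eq_nil_or_concat A |>.resolve_left hne
  have hβ : α < β := hA β (by simp)
  simp only [List.concat_eq_append, List.append_assoc, List.cons_append, List.nil_append]
  exact iff_intro (worm_imp_replicate_succ hβ D B m)
    (by simpa using worm_replicate_succ_imp α (D ++ [β]) B m)
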